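/- arXiv:2512.19656 — 3 statements merged into one kernel-verified Lean document; each statement's English description precedes it below -/
import Mathlib

section
/- Let V be a finite-dimensional real topological vector space, let C ⊆ V be a convex cone (not necessarily closed), and let S ⊆ V be a linear subspace such that S has non-empty intersection with the topological interior of C. Then the frontier of C ∩ S computed inside S (with the subspace topology) equals (frontier of C in V) ∩ S. -/
/-!
Let `x₀ ∈ S ∩ interior C`. For `x ∈ S`, the open segment from `x₀` to `x` lies in `S`, and
if `x ∈ closure C` it lies in `interior C`, so `x` is a limit of points of `C ∩ S`.
Conversely, if `x` is interior to `C ∩ S` relative to `S`, then `C ∩ S` contains a point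
`x + t • (x - x₀)` with `t > 0`, so `x` lies strictly between the interior point `x₀` and a
point of `C`, hence in `interior C`. Thus closure and interior, and so the frontier, commute
with restriction to `S`.
-/

open Set Filter Topology

universe u v

variable {E : Type u} {F : Type v} [AddCommGroup E] [Module ℝ E] [TopologicalSpace E]
  [IsTopologicalAddGroup E] [ContinuousConstSMul ℝ E]
  [AddCommGroup F] [Module ℝ F] [TopologicalSpace F] [ContinuousAdd F] [ContinuousSMul ℝ F]
  {s : Set E}

namespace Convex

theorem mem_interior_of_add_smul_sub_mem (hs : Convex ℝ s) {a x : E} (ha : a ∈ interior s)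
    {t : ℝ} (ht : 0 < t) (hx : x + t • (x - a) ∈ s) : x ∈ interior s := by
  have hx_eq : x = (t / (1 + t)) • a + (1 / (1 + t)) • (x + t • (x - a)) := by
    have : (1 : ℝ) + t ≠ 0 := by positivity
    match_scalars <;> field_simp; ring
  rw [hx_eq]
  exact hs.combo_interior_self_mem_interior ha hx (by positivity) (by positivity)
    (by field_simp; ring)

theorem subset_closure_preimage_linearMap (hs : Convex ℝ s) (f : F →ₗ[ℝ] E) {p : F}
    (hp : f p ∈ interior s) : f ⁻¹' closure s ⊆ closure (f ⁻¹' s) := by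
  intro q hq
  have hsegment : openSegment ℝ p q ⊆ f ⁻¹' s := by
    rw [← image_subset_iff, ← f.coe_toAffineMap, image_openSegment]
    exact (hs.openSegment_interior_closure_subset_interior hp hq).trans interior_subset
  exact closure_mono hsegment (segment_subset_closure_openSegment (right_mem_segment ℝ p q))

theorem interior_preimage_linearMap_subset (hs : Convex ℝ s) (f : F →ₗ[ℝ] E) {p : F}
    (hp : f p ∈ interior s) : interior (f ⁻¹' s) ⊆ f ⁻¹' interior s := by
  intro q hq
  have hline : Tendsto (fun t : ℝ => q + t • (q - p)) (𝓝[>] 0) (𝓝 q) := by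
    have : Continuous fun t : ℝ => q + t • (q - p) := by fun_prop
    exact (this.tendsto' 0 q (by simp)).mono_left nhdsWithin_le_nhds
  obtain ⟨t, hts, ht⟩ :=
    ((hline.eventually (isOpen_interior.mem_nhds hq)).and self_mem_nhdsWithin).exists
  have hfts : f q + t • (f q - f p) ∈ s := by
    simpa using interior_subset hts
  exact hs.mem_interior_of_add_smul_sub_mem hp ht hfts

theorem frontier_preimage_continuousLinearMap (hs : Convex ℝ s) (f : F →L[ℝ] E) {p : F}
    (hp : f p ∈ interior s) : frontier (f ⁻¹' s) = f ⁻¹' frontier s := by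
  have hclosure : closure (f ⁻¹' s) = f ⁻¹' closure s :=
    (f.continuous.closure_preimage_subset s).antisymm (hs.subset_closure_preimage_linearMap f.toLinearMap hp)
  have hinterior : interior (f ⁻¹' s) = f ⁻¹' interior s :=
    (hs.interior_preimage_linearMap_subset f.toLinearMap hp).antisymm
      (preimage_interior_subset_interior_preimage f.continuous)
  rw [frontier, frontier, hclosure, hinterior, preimage_sdiff]

end Convex

theorem frontier_inter_subspace_eq_general
    {V : Type*} [AddCommGroup V] [Module ℝ V] [TopologicalSpace V]
    [IsTopologicalAddGroup V] [ContinuousSMul ℝ V]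
    (C : Set V) (hconv : Convex ℝ C)
    (S : Submodule ℝ V) (hS : ((S : Set V) ∩ interior C).Nonempty) :
    Subtype.val '' frontier ((Subtype.val : S → V) ⁻¹' C) = frontier C ∩ (S : Set V) := by
  obtain ⟨x₀, hx₀S, hx₀⟩ := hS
  have hfrontier :=
    hconv.frontier_preimage_continuousLinearMap S.subtypeL (p := ⟨x₀, hx₀S⟩) hx₀
  rw [Submodule.coe_subtypeL, Submodule.coe_subtype] at hfrontier
  rw [hfrontier, image_preimage_eq_inter_range, Subtype.range_coe]

/-- Let `V` be a finite-dimensional real topological vector space,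
`C ⊆ V` a convex cone (not necessarily closed), and `S ⊆ V` a linear subspace meeting
the interior of `C`. Then the frontier of `C ∩ S` computed inside `S` (with the subspace
topology) equals `(frontier C) ∩ S`. -/
theorem frontier_inter_subspace_eq
    {V : Type*} [AddCommGroup V] [Module ℝ V] [TopologicalSpace V]
    [IsTopologicalAddGroup V] [ContinuousSMul ℝ V] [FiniteDimensional ℝ V]
    (C : Set V) (hconv : Convex ℝ C) (hcone : ∀ x ∈ C, ∀ r : ℝ, 0 < r → r • x ∈ C)
    (S : Submodule ℝ V) (hS : ((S : Set V) ∩ interior C).Nonempty) :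
    Subtype.val '' frontier ((Subtype.val : S → V) ⁻¹' C) = frontier C ∩ (S : Set V) :=
  frontier_inter_subspace_eq_general C hconv S hS
end

section
/- Let V be a real vector space with a symmetric bilinear form B. Let E₁, E₁', …, E_r, E_r' ∈ V and let γ ≠ 0 be a real number such that for every i: B(E_i, E_i) = B(E_i', E_i') = −2γ and B(E_i, E_i') = γ, while B(x, y) = 0 whenever x ∈ {E_i, E_i'}, y ∈ {E_j, E_j'} and i ≠ j. Let α ∈ V satisfy B(E_i, α) = B(E_i', α) = B(E₁, α) for all i. Set F_i = E_i + E_i' and E_I = F₁ + ⋯ + F_r, so that B(F_i, F_i) = −2γ ≠ 0 and B(E_I, E_I) = −2rγ ≠ 0. Then (r_{F₁} ∘ ⋯ ∘ r_{F_r})(α) = α + (2 B(E₁, α)/γ) · E_I, and this equals r_{E_I}(α), the reflection of α in E_I. -/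
open scoped BigOperators

/-! The vectors `F_i = E_i + E_i'` are pairwise `B`-orthogonal, so each reflection `r_{F_i}` only
subtracts its own multiple of `F_i` and the composite sends `α` to
`α - ∑ (2 B(F_i,α) / B(F_i,F_i)) F_i`. Here all these coefficients are equal, and
`B(E_I,α)`, `B(E_I,E_I)` are `r` times `B(F_i,α)`, `B(F_i,F_i)`, so the reflection in `E_I` has
the same coefficient. -/

/-- The reflection in a vector `E` with respect to a bilinear form `B`:
`r_E(x) = x − (2 B(E,x)/B(E,E)) • E`. -/
noncomputable def reflectIn {V : Type*} [AddCommGroup V] [Module ℝ V]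
    (B : V →ₗ[ℝ] V →ₗ[ℝ] ℝ) (E : V) : V → V :=
  fun x => x - (2 * B E x / B E E) • E

/-- The composition `r_{F₁} ∘ r_{F₂} ∘ ⋯ ∘ r_{F_r}` of the reflections in the vectors
`F 0, …, F (r-1)`. -/
noncomputable def reflectComp {V : Type*} [AddCommGroup V] [Module ℝ V]
    (B : V →ₗ[ℝ] V →ₗ[ℝ] ℝ) {r : ℕ} (F : Fin r → V) : V → V :=
  (List.ofFn fun i : Fin r => reflectIn B (F i)).foldr (· ∘ ·) id

section Reflections

variable {V : Type*} [AddCommGroup V] [Module ℝ V] (B : V →ₗ[ℝ] V →ₗ[ℝ] ℝ)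

theorem reflectComp_succ {r : ℕ} (F : Fin (r + 1) → V) :
    reflectComp B F = reflectIn B (F 0) ∘ reflectComp B (F ∘ Fin.succ) := by
  simp only [reflectComp, List.ofFn_succ, List.foldr_cons, Function.comp_def]

theorem reflectComp_apply_of_isOrthoᵢ {r : ℕ} {F : Fin r → V} (hF : B.IsOrthoᵢ F) (x : V) :
    reflectComp B F x = x - ∑ i, (2 * B (F i) x / B (F i) (F i)) • F i := by
  induction r with
  | zero => simp [reflectComp]
  | succ r ih =>
    have hF' : B.IsOrthoᵢ (F ∘ Fin.succ) := fun i j hij => hF ((Fin.succ_injective r).ne hij)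
    have horth : ∀ i : Fin r, B (F 0) (F i.succ) = 0 := fun i => hF (Fin.succ_ne_zero i).symm
    rw [reflectComp_succ, Function.comp_apply, ih hF', Fin.sum_univ_succ, reflectIn]
    simp only [Function.comp_apply, map_sub, map_sum, map_smul, smul_eq_mul, horth, mul_zero,
      Finset.sum_const_zero, sub_zero]
    abel

theorem apply_sum_sum_of_isOrthoᵢ {ι : Type*} [Fintype ι] {F : ι → V} (hF : B.IsOrthoᵢ F) :
    B (∑ i, F i) (∑ i, F i) = ∑ i, B (F i) (F i) := by
  simp only [map_sum, LinearMap.sum_apply]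
  exact Finset.sum_congr rfl fun i _ =>
    Finset.sum_eq_single i (fun j _ hji => hF hji) (fun hi => absurd (Finset.mem_univ i) hi)

theorem reflectComp_apply_of_isOrthoᵢ_of_const {r : ℕ} {F : Fin r → V} (hF : B.IsOrthoᵢ F)
    {x : V} {a d : ℝ} (hd : ∀ i, B (F i) (F i) = d) (ha : ∀ i, B (F i) x = a) :
    reflectComp B F x = x - (2 * a / d) • ∑ i, F i := by
  simp only [reflectComp_apply_of_isOrthoᵢ B hF, hd, ha, Finset.smul_sum]

theorem reflectIn_sum_apply_of_isOrthoᵢ_of_const {ι : Type*} [Fintype ι] [Nonempty ι]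
    {F : ι → V} (hF : B.IsOrthoᵢ F) {x : V} {a d : ℝ}
    (hd : ∀ i, B (F i) (F i) = d) (ha : ∀ i, B (F i) x = a) :
    reflectIn B (∑ i, F i) x = x - (2 * a / d) • ∑ i, F i := by
  have hn : (Fintype.card ι : ℝ) ≠ 0 := Nat.cast_ne_zero.mpr Fintype.card_ne_zero
  have hxF : B (∑ i, F i) x = Fintype.card ι * a := by
    simp [map_sum, LinearMap.sum_apply, ha]
  rw [reflectIn, apply_sum_sum_of_isOrthoᵢ B hF, hxF]
  simp only [hd, Finset.sum_const, Finset.card_univ, nsmul_eq_mul]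
  rw [mul_left_comm, mul_div_mul_left _ _ hn]

end Reflections

theorem reflectComp_A2_orbit_general
    {V : Type*} [AddCommGroup V] [Module ℝ V]
    (B : V →ₗ[ℝ] V →ₗ[ℝ] ℝ) (hsymm : ∀ x y, B x y = B y x)
    {r : ℕ} (hr : 0 < r) (E E' : Fin r → V) (γ : ℝ)
    (hEE : ∀ i, B (E i) (E i) = -2 * γ)
    (hE'E' : ∀ i, B (E' i) (E' i) = -2 * γ)
    (hEE' : ∀ i, B (E i) (E' i) = γ)
    (horth₁ : ∀ i j, i ≠ j → B (E i) (E j) = 0)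
    (horth₂ : ∀ i j, i ≠ j → B (E i) (E' j) = 0)
    (horth₃ : ∀ i j, i ≠ j → B (E' i) (E' j) = 0)
    (α : V)
    (hα : ∀ i, B (E i) α = B (E ⟨0, hr⟩) α)
    (hα' : ∀ i, B (E' i) α = B (E ⟨0, hr⟩) α) :
    reflectComp B (fun i => E i + E' i) α
        = α + (2 * B (E ⟨0, hr⟩) α / γ) • (∑ i, (E i + E' i)) ∧
    reflectComp B (fun i => E i + E' i) α = reflectIn B (∑ i, (E i + E' i)) α := by
  set c := B (E ⟨0, hr⟩) α
  have hF : B.IsOrthoᵢ fun i => E i + E' i := LinearMap.isOrthoᵢ_def.2 fun i j hij => by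
    simp only [map_add, LinearMap.add_apply, horth₁ i j hij, horth₂ i j hij, horth₃ i j hij,
      hsymm (E' i), horth₂ j i hij.symm, add_zero]
  have hFF : ∀ i, B (E i + E' i) (E i + E' i) = -2 * γ := fun i => by
    simp only [map_add, LinearMap.add_apply, hEE, hE'E', hEE', hsymm (E' i)]
    ring
  have hFα : ∀ i, B (E i + E' i) α = 2 * c := fun i => by
    rw [map_add, LinearMap.add_apply, hα, hα']
    ring
  have hcoeff : 2 * (2 * c) / (-2 * γ) = -(2 * c / γ) := by ring
  have : Nonempty (Fin r) := ⟨⟨0, hr⟩⟩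
  rw [reflectComp_apply_of_isOrthoᵢ_of_const B hF hFF hFα,
    reflectIn_sum_apply_of_isOrthoᵢ_of_const B hF hFF hFα, hcoeff, neg_smul, sub_neg_eq_add]
  exact ⟨rfl, rfl⟩

/-- Let `B` be a symmetric bilinear form on a real vector space `V` and
`E₁, E₁', …, E_r, E_r'` vectors with `B(E_i,E_i) = B(E_i',E_i') = −2γ`, `B(E_i,E_i') = γ`
(`γ ≠ 0`), the pairs for different indices being mutually orthogonal.  If `α` pairs
equally with all `E_i` and `E_i'`, then with `F_i = E_i + E_i'` and
`E_I = F₁ + ⋯ + F_r`, one has `(r_{F₁} ∘ ⋯ ∘ r_{F_r})(α) = α + (2B(E₁,α)/γ)·E_I`,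
and this equals the reflection of `α` in `E_I`. -/
theorem reflectComp_A2_orbit
    {V : Type*} [AddCommGroup V] [Module ℝ V]
    (B : V →ₗ[ℝ] V →ₗ[ℝ] ℝ) (hsymm : ∀ x y, B x y = B y x)
    {r : ℕ} (hr : 0 < r) (E E' : Fin r → V) (γ : ℝ) (hγ : γ ≠ 0)
    (hEE : ∀ i, B (E i) (E i) = -2 * γ)
    (hE'E' : ∀ i, B (E' i) (E' i) = -2 * γ)
    (hEE' : ∀ i, B (E i) (E' i) = γ)
    (horth₁ : ∀ i j, i ≠ j → B (E i) (E j) = 0)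
    (horth₂ : ∀ i j, i ≠ j → B (E i) (E' j) = 0)
    (horth₃ : ∀ i j, i ≠ j → B (E' i) (E' j) = 0)
    (α : V)
    (hα : ∀ i, B (E i) α = B (E ⟨0, hr⟩) α)
    (hα' : ∀ i, B (E' i) α = B (E ⟨0, hr⟩) α) :
    reflectComp B (fun i => E i + E' i) α
        = α + (2 * B (E ⟨0, hr⟩) α / γ) • (∑ i, (E i + E' i)) ∧
    reflectComp B (fun i => E i + E' i) α = reflectIn B (∑ i, (E i + E' i)) α :=
  reflectComp_A2_orbit_general B hsymm hr E E' γ hEE hE'E' hEE' horth₁ horth₂ horth₃ α hα hα'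
end

section
/- Let Λ be a free ℤ-module of finite rank with a symmetric bilinear form b : Λ × Λ → ℤ, let V = Λ ⊗_ℤ ℝ and let B be the ℝ-bilinear extension of b. Assume B is nondegenerate, that there exists v ∈ V with B(v, v) > 0, and that every linear subspace of V on which B is positive definite has dimension at most 1 (i.e. B has signature (1, rank Λ − 1)). Let K be a compact subset of {v ∈ V : B(v, v) > 0} and let B₀ > 0 be a real number. Then the set of δ ∈ Λ with −B₀ ≤ b(δ, δ) < 0 for which the hyperplane δ^⊥ = {v ∈ V : B(δ ⊗ 1, v) = 0} meets K is finite. -/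
open scoped TensorProduct

/-! For `v` with `B(v,v) > 0`, signature `(1, n-1)` forces `B` to be negative definite on `v^⊥`:
a positive vector orthogonal to `v` would span a positive definite plane with it, and a nonzero
isotropic `u ⊥ v` can be perturbed, using nondegeneracy, into such a positive vector.
Compactness of `K` and of the unit sphere then gives `c > 0` with `B(x,x) ≤ -c‖x‖²` whenever
`x ⊥ v` for some `v ∈ K`, so the lattice vectors in question lie in a ball of radius
`√(B₀/c)`, which contains only finitely many of them. -/

section SignatureOne

variable {V : Type*} [AddCommGroup V] [Module ℝ V] {B : V →ₗ[ℝ] V →ₗ[ℝ] ℝ}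

theorem apply_ne_zero_of_pos_of_pos (hs : ∀ x y, B x y = B y x)
    (hsig : ∀ W : Submodule ℝ V, (∀ x ∈ W, x ≠ 0 → 0 < B x x) → Module.finrank ℝ W ≤ 1)
    {v z : V} (hv : 0 < B v v) (hz : 0 < B z z) : B z v ≠ 0 := by
  intro hzv
  let f : ℝ × ℝ →ₗ[ℝ] V :=
    (LinearMap.toSpanSingleton ℝ V v).coprod (LinearMap.toSpanSingleton ℝ V z)
  have hf : ∀ p ≠ 0, 0 < B (f p) (f p) := by
    rintro ⟨a, c⟩ hac
    have hexp : B (f (a, c)) (f (a, c)) = a ^ 2 * B v v + c ^ 2 * B z z := by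
      simp only [f, LinearMap.coprod_apply, LinearMap.toSpanSingleton_apply, map_add, map_smul,
        LinearMap.add_apply, LinearMap.smul_apply, smul_eq_mul, hs v z, hzv, mul_zero, add_zero,
        zero_add]
      ring
    rw [hexp]
    rcases eq_or_ne a 0 with rfl | ha
    · have hc : c ≠ 0 := by rintro rfl; exact hac rfl
      rw [zero_pow two_ne_zero, zero_mul, zero_add]
      positivity
    · positivity
  have hinj : Function.Injective f := by
    rw [← LinearMap.ker_eq_bot, LinearMap.ker_eq_bot']
    intro p hp
    by_contra hp0
    simpa [hp] using hf p hp0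
  have hW := hsig (LinearMap.range f) <| by
    rintro _ ⟨p, rfl⟩ hp
    exact hf p (by rintro rfl; exact hp (map_zero f))
  rw [LinearMap.finrank_range_of_inj hinj] at hW
  simp at hW

theorem exists_pos_orthogonal_of_isotropic (hs : ∀ x y, B x y = B y x) {u v w : V}
    (hv : 0 < B v v) (hu : B u u = 0) (huv : B u v = 0) (huw : B u w ≠ 0) :
    ∃ z, B z v = 0 ∧ 0 < B z z := by
  set w' := w - (B w v / B v v) • v
  have hw'v : B w' v = 0 := by
    simp only [w', map_sub, map_smul, LinearMap.sub_apply, LinearMap.smul_apply, smul_eq_mul]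
    field_simp
    ring
  have huw' : B u w' = B u w := by simp [w', huv]
  set c := B w' w'
  set t := (|c| + 1) / B u w
  refine ⟨t • u + w', by simp [huv, hw'v], ?_⟩
  have hexp : B (t • u + w') (t • u + w') = 2 * (t * B u w) + c := by
    simp only [map_add, map_smul, LinearMap.add_apply, LinearMap.smul_apply, smul_eq_mul, hu,
      hs w' u, huw', c]
    ring
  rw [hexp, div_mul_cancel₀ _ huw]
  linarith [neg_abs_le c, abs_nonneg c]

theorem apply_self_neg_of_orthogonal_of_pos (hs : ∀ x y, B x y = B y x)
    (hnd : ∀ v : V, (∀ w, B v w = 0) → v = 0)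
    (hsig : ∀ W : Submodule ℝ V, (∀ x ∈ W, x ≠ 0 → 0 < B x x) → Module.finrank ℝ W ≤ 1)
    {u v : V} (hv : 0 < B v v) (huv : B u v = 0) (hu : u ≠ 0) : B u u < 0 := by
  rcases lt_trichotomy (B u u) 0 with hneg | hiso | hpos
  · exact hneg
  · obtain ⟨w, hw⟩ : ∃ w, B u w ≠ 0 := by
      by_contra! h
      exact hu (hnd u h)
    obtain ⟨z, hzv, hz⟩ := exists_pos_orthogonal_of_isotropic hs hv hiso huv hw
    exact absurd hzv (apply_ne_zero_of_pos_of_pos hs hsig hv hz)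
  · exact absurd huv (apply_ne_zero_of_pos_of_pos hs hsig hv hpos)

end SignatureOne

theorem isBounded_setOf_orthogonal_of_isCompact {E : Type*} [NormedAddCommGroup E]
    [NormedSpace ℝ E] [FiniteDimensional ℝ E] (B : E →ₗ[ℝ] E →ₗ[ℝ] ℝ) {K : Set E}
    (hK : IsCompact K) (hneg : ∀ u ≠ 0, ∀ v ∈ K, B u v = 0 → B u u < 0) (B₀ : ℝ) :
    Bornology.IsBounded {x | -B₀ ≤ B x x ∧ ∃ v ∈ K, B x v = 0} := by
  have hB : Continuous fun p : E × E => B p.1 p.2 := B.toContinuousBilinearMap.continuous₂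
  set S := (Metric.sphere (0 : E) 1 ×ˢ K) ∩ {p | B p.1 p.2 = 0}
  have hS : IsCompact S :=
    ((isCompact_sphere 0 1).prod hK).inter_right (isClosed_eq hB continuous_const)
  obtain ⟨c, hc, hcS⟩ : ∃ c, 0 < c ∧ ∀ p ∈ S, c ≤ -B p.1 p.1 := by
    refine hS.exists_forall_le' (hB.comp (continuous_fst.prodMk continuous_fst)).neg.continuousOn ?_
    rintro ⟨u, v⟩ ⟨⟨hu, hv⟩, huv⟩
    exact neg_pos.2 (hneg u (ne_zero_of_mem_unit_sphere ⟨u, hu⟩) v hv huv)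
  refine (Metric.isBounded_closedBall (x := 0) (r := max 1 (B₀ / c))).subset ?_
  rintro x ⟨hx, v, hv, hxv⟩
  rw [mem_closedBall_zero_iff]
  rcases eq_or_ne x 0 with rfl | hx0
  · simp
  have hxn : 0 < ‖x‖ := norm_pos_iff.2 hx0
  -- the bound `-c` on the unit sphere scales quadratically
  have hquad : c * ‖x‖ ^ 2 ≤ B₀ := by
    have h := hcS (‖x‖⁻¹ • x, v) ⟨⟨by simp [norm_smul, hxn.ne'], hv⟩, by simp [hxv]⟩
    simp only [map_smul, LinearMap.smul_apply, smul_eq_mul] at h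
    have : c * ‖x‖ ^ 2 ≤ -B x x := by
      calc c * ‖x‖ ^ 2 ≤ -(‖x‖⁻¹ * (‖x‖⁻¹ * B x x)) * ‖x‖ ^ 2 := by gcongr
        _ = -B x x := by field_simp
    linarith
  rcases le_or_gt ‖x‖ 1 with h1 | h1
  · exact le_max_of_le_left h1
  · refine le_max_of_le_right ((le_div_iff₀ hc).2 ?_)
    nlinarith [mul_pos (mul_pos hc hxn) (sub_pos.2 h1)]

theorem Module.Basis.finite_setOf_equivFun_baseChange_mem {ι Λ : Type*} [Fintype ι]
    [AddCommGroup Λ] (bΛ : Module.Basis ι ℤ Λ) {s : Set (ι → ℝ)} (hs : Bornology.IsBounded s) :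
    {δ : Λ | (bΛ.baseChange ℝ).equivFun ((1 : ℝ) ⊗ₜ[ℤ] δ) ∈ s}.Finite := by
  set f : Λ → ι → ℝ := fun δ => (bΛ.baseChange ℝ).equivFun ((1 : ℝ) ⊗ₜ[ℤ] δ)
  have hf : ∀ δ, f δ = fun i => (bΛ.repr δ i : ℝ) := by
    intro δ
    ext i
    simp [f, Module.Basis.baseChange_repr_tmul]
  have hinj : Function.Injective f := by
    intro δ δ' h
    apply bΛ.repr.injective
    ext i
    simpa [hf] using congrFun h i
  refine ((ZSpan.setFinite_inter (Pi.basisFun ℝ ι) hs).preimage hinj.injOn).subset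
    fun δ hδ => ⟨hδ, ?_⟩
  rw [SetLike.mem_coe, Module.Basis.mem_span_iff_repr_mem]
  simp [hf]

theorem walls_meeting_compact_finite_general
    {Λ : Type*} [AddCommGroup Λ] [Module.Free ℤ Λ] [Module.Finite ℤ Λ]
    [TopologicalSpace (ℝ ⊗[ℤ] Λ)] [IsTopologicalAddGroup (ℝ ⊗[ℤ] Λ)]
    [ContinuousSMul ℝ (ℝ ⊗[ℤ] Λ)] [T2Space (ℝ ⊗[ℤ] Λ)]
    (b : Λ →ₗ[ℤ] Λ →ₗ[ℤ] ℤ) (hsymm : ∀ x y, b x y = b y x)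
    (hnd : ∀ v : ℝ ⊗[ℤ] Λ, (∀ w, LinearMap.BilinForm.baseChange ℝ b v w = 0) → v = 0)
    (hsig : ∀ W : Submodule ℝ (ℝ ⊗[ℤ] Λ),
      (∀ x ∈ W, x ≠ 0 → 0 < LinearMap.BilinForm.baseChange ℝ b x x) →
      Module.finrank ℝ W ≤ 1)
    (K : Set (ℝ ⊗[ℤ] Λ)) (hK : IsCompact K)
    (hKpos : K ⊆ {v | 0 < LinearMap.BilinForm.baseChange ℝ b v v})
    (B₀ : ℝ) :
    {δ : Λ | -B₀ ≤ (b δ δ : ℝ) ∧ b δ δ < 0 ∧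
      ∃ v ∈ K, LinearMap.BilinForm.baseChange ℝ b ((1 : ℝ) ⊗ₜ[ℤ] δ) v = 0}.Finite := by
  set B := LinearMap.BilinForm.baseChange ℝ b
  have hBsymm : ∀ x y, B x y = B y x :=
    (LinearMap.BilinForm.IsSymm.baseChange ℝ (B₂ := b) ⟨hsymm⟩).eq
  -- `ℝ ⊗[ℤ] Λ` carries no norm, so `B` and `K` are transported to the coordinate space `ι → ℝ`
  let bΛ := Module.Free.chooseBasis ℤ Λ
  let e := (bΛ.baseChange ℝ).equivFun
  have he : Continuous e := e.toLinearMap.continuous_of_finiteDimensional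
  let B' := B.compl₁₂ e.symm.toLinearMap e.symm.toLinearMap
  have hneg : ∀ u ≠ 0, ∀ v ∈ e '' K, B' u v = 0 → B' u u < 0 := by
    rintro u hu _ ⟨v, hv, rfl⟩ huv
    refine apply_self_neg_of_orthogonal_of_pos hBsymm hnd hsig (hKpos hv) ?_ (by simpa using hu)
    simpa only [B', LinearMap.compl₁₂_apply, LinearEquiv.coe_coe, LinearEquiv.symm_apply_apply]
      using huv
  refine (bΛ.finite_setOf_equivFun_baseChange_mem
    (isBounded_setOf_orthogonal_of_isCompact B' (hK.image he) hneg B₀)).subset ?_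
  rintro δ ⟨hlow, -, v, hv, hδv⟩
  show e (1 ⊗ₜ δ) ∈ {x | -B₀ ≤ B' x x ∧ ∃ v ∈ e '' K, B' x v = 0}
  refine ⟨?_, e v, Set.mem_image_of_mem e hv, by simpa [B'] using hδv⟩
  simpa [B', B] using hlow

/-- Let `Λ` be a free `ℤ`-module of finite rank with a symmetric
bilinear form `b`, let `V = ℝ ⊗_ℤ Λ` (with its canonical Hausdorff vector-space topology)
and let `B` be the `ℝ`-bilinear extension of `b`.  Assume `B` is nondegenerate, that
`B(v,v) > 0` for some `v`, and that every subspace on which `B` is positive definite has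
dimension at most `1` (signature `(1, rk Λ − 1)`).  Let `K` be a compact subset of
`{v : B(v,v) > 0}` and `B₀ > 0`.  Then the set of `δ ∈ Λ` with `−B₀ ≤ b(δ,δ) < 0` whose
wall `δ^⊥` meets `K` is finite. -/
theorem walls_meeting_compact_finite
    {Λ : Type*} [AddCommGroup Λ] [Module.Free ℤ Λ] [Module.Finite ℤ Λ]
    [TopologicalSpace (ℝ ⊗[ℤ] Λ)] [IsTopologicalAddGroup (ℝ ⊗[ℤ] Λ)]
    [ContinuousSMul ℝ (ℝ ⊗[ℤ] Λ)] [T2Space (ℝ ⊗[ℤ] Λ)]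
    (b : Λ →ₗ[ℤ] Λ →ₗ[ℤ] ℤ) (hsymm : ∀ x y, b x y = b y x)
    (hnd : ∀ v : ℝ ⊗[ℤ] Λ, (∀ w, LinearMap.BilinForm.baseChange ℝ b v w = 0) → v = 0)
    (hpos : ∃ v : ℝ ⊗[ℤ] Λ, 0 < LinearMap.BilinForm.baseChange ℝ b v v)
    (hsig : ∀ W : Submodule ℝ (ℝ ⊗[ℤ] Λ),
      (∀ x ∈ W, x ≠ 0 → 0 < LinearMap.BilinForm.baseChange ℝ b x x) →
      Module.finrank ℝ W ≤ 1)
    (K : Set (ℝ ⊗[ℤ] Λ)) (hK : IsCompact K)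
    (hKpos : K ⊆ {v | 0 < LinearMap.BilinForm.baseChange ℝ b v v})
    (B₀ : ℝ) (hB₀ : 0 < B₀) :
    {δ : Λ | -B₀ ≤ (b δ δ : ℝ) ∧ b δ δ < 0 ∧
      ∃ v ∈ K, LinearMap.BilinForm.baseChange ℝ b ((1 : ℝ) ⊗ₜ[ℤ] δ) v = 0}.Finite :=
  walls_meeting_compact_finite_general b hsymm hnd hsig K hK hKpos B₀
end
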